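/- On each of the six-dimensional real Lie algebras 𝔨₁^{-1/2,-1/2}, 𝔨₈^{p,-p/2,0} (p≠0), 𝔨₈^{p,-p/2,-p/2} (p≠0), 𝔨₁₁^{p,-p/2,0,s} (p≠0, 1≥|s|>0), 𝔨₁₁^{p,-p/2,-p/2,s} (p≠0, 1≥|s|>0), 𝔨₁₇^{-1/2}, 𝔨₁₉^{p,-p/2} (p≠0) (structure equations as in the paper's Theorem on split generalized Kähler almost abelian Lie algebras), the triple (J₊,J₋,g) defined on the basis f₁,…,f₆ by J₊f₁ = f₆, J₊f₂ = f₃, J₊f₃ = -f₂, J₊f₄ = f₅, J₊f₅ = -f₄, J₊f₆ = -f₁; J₋f₁ = f₆, J₋f₂ = -f₃, J₋f₃ = f₂, J₋f₄ = -f₅, J₋f₅ = f₄, J₋f₆ = -f₁; g = Σᵢ fⁱ⊗fⁱ, is a split generalized Kähler structure (both J± are integrable, g is Hermitian for both, dᶜ₊ω₊ + dᶜ₋ω₋ = 0, d(dᶜ₊ω₊) = 0, and J₊J₋ = J₋J₊). Moreover the torsion 3-form H = dᶜ₊ω₊ equals: f^{123} for 𝔨₁₇^{-1/2}; p·f^{123}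 for 𝔨₁₉^{p,-p/2}, 𝔨₈^{p,-p/2,0} and 𝔨₁₁^{p,-p/2,0,s}; f^{123}+f^{145} for 𝔨₁^{-1/2,-1/2}; p·f^{123}+p·f^{145} for 𝔨₈^{p,-p/2,-p/2} and 𝔨₁₁^{p,-p/2,-p/2,s}. In particular H ≠ 0 in each case. -/

import Mathlib

noncomputable section

/-- The underlying vector space of a six-dimensional real Lie algebra. -/
abbrev V6 : Type := Fin 6 → ℝ

/-- The Lie bracket of the almost abelian Lie algebra determined by the matrix `A` of
`ad_{f₆}` (column `j` of `A` lists the coordinates of `[f₆, f_{j+1}]`; the ideal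
`span{f₁,…,f₅}` is abelian). -/
def braa (A : Matrix (Fin 6) (Fin 6) ℝ) : V6 →ₗ[ℝ] V6 →ₗ[ℝ] V6 :=
  LinearMap.mk₂ ℝ (fun x y => x 5 • A.mulVec y - y 5 • A.mulVec x)
    (by intro x x' y; simp [Matrix.mulVec_add, Pi.add_apply, add_smul, smul_add]; module)
    (by intro c x y; simp [Matrix.mulVec_smul, Pi.smul_apply, smul_eq_mul, mul_smul]; module)
    (by intro x y y'; simp [Matrix.mulVec_add, smul_add, add_smul]; module)
    (by intro c x y; simp [Matrix.mulVec_smul, Pi.smul_apply, smul_eq_mul, mul_smul]; module)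

/-- The bilinear form on `V6` determined by a matrix `G`. -/
def gOf (G : Matrix (Fin 6) (Fin 6) ℝ) : V6 →ₗ[ℝ] V6 →ₗ[ℝ] ℝ :=
  LinearMap.mk₂ ℝ (fun x y => dotProduct x (G.mulVec y))
    (by intro x x' y; simp [add_dotProduct])
    (by intro c x y; simp [smul_dotProduct, smul_eq_mul])
    (by intro x y y'; simp [Matrix.mulVec_add, dotProduct_add])
    (by intro c x y; simp [Matrix.mulVec_smul, dotProduct_smul, smul_eq_mul])

/-- The standard inner product, making `f₁,…,f₆` orthonormal. -/
def gstd : V6 →ₗ[ℝ] V6 →ₗ[ℝ] ℝ := gOf 1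

/-- The linear endomorphism of `V6` determined by a matrix. -/
def endOf (M : Matrix (Fin 6) (Fin 6) ℝ) : V6 →ₗ[ℝ] V6 := Matrix.toLin' M

/-- `br` is a Lie bracket: antisymmetric and satisfying the Jacobi identity
(bilinearity is built into the type). -/
def IsBracket (br : V6 →ₗ[ℝ] V6 →ₗ[ℝ] V6) : Prop :=
  (∀ x y, br x y = - br y x) ∧
  (∀ x y z, br (br x y) z + br (br y z) x + br (br z x) y = 0)

/-- The Lie algebra has an abelian ideal of codimension one. -/
def IsAlmostAbelian (br : V6 →ₗ[ℝ] V6 →ₗ[ℝ] V6) : Prop :=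
  ∃ h : Submodule ℝ V6, Module.finrank ℝ h = 5 ∧
    (∀ x ∈ h, ∀ y ∈ h, br x y = 0) ∧ (∀ x : V6, ∀ y ∈ h, br x y ∈ h)

/-- Nilpotency of the Lie algebra: some length of iterated brackets
`[x₁,[x₂,…,[xₙ,y]…]]` always vanishes. -/
def IsNilpotentBr (br : V6 →ₗ[ℝ] V6 →ₗ[ℝ] V6) : Prop :=
  ∃ n : ℕ, ∀ x : Fin n → V6, ∀ y : V6, (List.ofFn x).foldr (fun a b => br a b) y = 0

/-- The Nijenhuis tensor of `J`. -/
def Nij (br : V6 →ₗ[ℝ] V6 →ₗ[ℝ] V6) (J : V6 →ₗ[ℝ] V6) (x y : V6) : V6 :=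
  br (J x) (J y) - br x y - J (br (J x) y) - J (br x (J y))

/-- A complex structure: `J ∘ J = -id` with vanishing Nijenhuis tensor. -/
def IsCpxStr (br : V6 →ₗ[ℝ] V6 →ₗ[ℝ] V6) (J : V6 →ₗ[ℝ] V6) : Prop :=
  (∀ x, J (J x) = -x) ∧ (∀ x y, Nij br J x y = 0)

/-- A Hermitian structure: a complex structure together with a positive-definite
compatible inner product. -/
def IsHermStr (br : V6 →ₗ[ℝ] V6 →ₗ[ℝ] V6) (J : V6 →ₗ[ℝ] V6)
    (g : V6 →ₗ[ℝ] V6 →ₗ[ℝ] ℝ) : Prop :=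
  IsCpxStr br J ∧ (∀ x y, g x y = g y x) ∧ (∀ x, x ≠ 0 → 0 < g x x) ∧
    (∀ x y, g (J x) (J y) = g x y)

/-- The fundamental form `ω = g(J·,·)`. -/
def fund (J : V6 →ₗ[ℝ] V6) (g : V6 →ₗ[ℝ] V6 →ₗ[ℝ] ℝ) : V6 → V6 → ℝ :=
  fun x y => g (J x) y

/-- The Chevalley–Eilenberg differential of a 2-form. -/
def d2 (br : V6 →ₗ[ℝ] V6 →ₗ[ℝ] V6) (ω : V6 → V6 → ℝ) : V6 → V6 → V6 → ℝ :=
  fun x y z => -ω (br x y) z + ω (br x z) y - ω (br y z) x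

/-- The Chevalley–Eilenberg differential of a 3-form. -/
def d3 (br : V6 →ₗ[ℝ] V6 →ₗ[ℝ] V6) (H : V6 → V6 → V6 → ℝ) : V6 → V6 → V6 → V6 → ℝ :=
  fun x y z w => -H (br x y) z w + H (br x z) y w - H (br x w) y z
    - H (br y z) x w + H (br y w) x z - H (br z w) x y

/-- The form `dᶜω`, where `dᶜω(X,Y,Z) = dω(JX,JY,JZ)` and `ω = g(J·,·)`. -/
def dC (br : V6 →ₗ[ℝ] V6 →ₗ[ℝ] V6) (J : V6 →ₗ[ℝ] V6)
    (g : V6 →ₗ[ℝ] V6 →ₗ[ℝ] ℝ) : V6 → V6 → V6 → ℝ :=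
  fun x y z => d2 br (fund J g) (J x) (J y) (J z)

/-- A Kähler structure: a Hermitian structure with closed fundamental form. -/
def IsKahlerStr (br : V6 →ₗ[ℝ] V6 →ₗ[ℝ] V6) (J : V6 →ₗ[ℝ] V6)
    (g : V6 →ₗ[ℝ] V6 →ₗ[ℝ] ℝ) : Prop :=
  IsHermStr br J g ∧ ∀ x y z, d2 br (fund J g) x y z = 0

/-- An SKT (pluriclosed) structure: a Hermitian structure with `d(dᶜω) = 0`. -/
def IsSKTStr (br : V6 →ₗ[ℝ] V6 →ₗ[ℝ] V6) (J : V6 →ₗ[ℝ] V6)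
    (g : V6 →ₗ[ℝ] V6 →ₗ[ℝ] ℝ) : Prop :=
  IsHermStr br J g ∧ ∀ x y z w, d3 br (dC br J g) x y z w = 0

/-- A generalized Kähler structure `(J₊, J₋, g)`. -/
def IsGenKahler (br : V6 →ₗ[ℝ] V6 →ₗ[ℝ] V6) (Jp Jm : V6 →ₗ[ℝ] V6)
    (g : V6 →ₗ[ℝ] V6 →ₗ[ℝ] ℝ) : Prop :=
  IsHermStr br Jp g ∧ IsHermStr br Jm g ∧
    (∀ x y z, dC br Jp g x y z + dC br Jm g x y z = 0) ∧
    (∀ x y z w, d3 br (dC br Jp g) x y z w = 0)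

/-- Unimodularity: every adjoint operator is traceless. -/
def Unimodular (br : V6 →ₗ[ℝ] V6 →ₗ[ℝ] V6) : Prop :=
  ∀ x : V6, LinearMap.trace ℝ V6 (br x) = 0

/-- Isomorphism of Lie algebra structures on `V6`. -/
def LieIso (br br' : V6 →ₗ[ℝ] V6 →ₗ[ℝ] V6) : Prop :=
  ∃ φ : V6 ≃ₗ[ℝ] V6, ∀ x y, φ (br x y) = br' (φ x) (φ y)

/-- The basis 3-form `fⁱ ∧ fʲ ∧ f^k`. -/
def tri (i j k : Fin 6) : V6 → V6 → V6 → ℝ := fun x y z =>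
  Matrix.det !![x i, x j, x k; y i, y j, y k; z i, z j, z k]

/-- The complex structure `J f₁ = f₆`, `J f₂ = f₃`, `J f₃ = -f₂`, `J f₄ = f₅`,
`J f₅ = -f₄`, `J f₆ = -f₁`. -/
def JP : V6 →ₗ[ℝ] V6 :=
  endOf !![0,0,0,0,0,-1; 0,0,-1,0,0,0; 0,1,0,0,0,0; 0,0,0,0,-1,0; 0,0,0,1,0,0; 1,0,0,0,0,0]

/-- The complex structure `J₋ f₁ = f₆`, `J₋ f₂ = -f₃`, `J₋ f₃ = f₂`, `J₋ f₄ = -f₅`,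
`J₋ f₅ = f₄`, `J₋ f₆ = -f₁`. -/
def JM : V6 →ₗ[ℝ] V6 :=
  endOf !![0,0,0,0,0,-1; 0,0,1,0,0,0; 0,-1,0,0,0,0; 0,0,0,0,1,0; 0,0,0,-1,0,0; 1,0,0,0,0,0]

/-- The Lie algebra `𝔨₁^{p,r}`. -/
def k1 (p r : ℝ) : V6 →ₗ[ℝ] V6 →ₗ[ℝ] V6 :=
  braa !![1,0,0,0,0,0; 0,p,0,0,0,0; 0,0,p,0,0,0; 0,0,0,r,0,0; 0,0,0,0,r,0; 0,0,0,0,0,0]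

/-- The Lie algebra `𝔨₈^{p,q,s}`. -/
def k8 (p q s : ℝ) : V6 →ₗ[ℝ] V6 →ₗ[ℝ] V6 :=
  braa !![p,0,0,0,0,0; 0,q,0,0,0,0; 0,0,q,0,0,0; 0,0,0,s,1,0; 0,0,0,-1,s,0; 0,0,0,0,0,0]

/-- The Lie algebra `𝔨₁₁^{p,q,r,s}`. -/
def k11 (p q r s : ℝ) : V6 →ₗ[ℝ] V6 →ₗ[ℝ] V6 :=
  braa !![p,0,0,0,0,0; 0,q,1,0,0,0; 0,-1,q,0,0,0; 0,0,0,r,s,0; 0,0,0,-s,r,0; 0,0,0,0,0,0]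

/-- The Lie algebra `𝔨₁₇^p`. -/
def k17 (p : ℝ) : V6 →ₗ[ℝ] V6 →ₗ[ℝ] V6 :=
  braa !![1,0,0,0,0,0; 0,p,0,0,0,0; 0,0,p,0,0,0; 0,0,0,0,0,0; 0,0,0,0,0,0; 0,0,0,0,0,0]

/-- The Lie algebra `𝔨₁₉^{p,q}`. -/
def k19 (p q : ℝ) : V6 →ₗ[ℝ] V6 →ₗ[ℝ] V6 :=
  braa !![p,0,0,0,0,0; 0,q,1,0,0,0; 0,-1,q,0,0,0; 0,0,0,0,0,0; 0,0,0,0,0,0; 0,0,0,0,0,0]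

/-- The claim verified family by family: `(JP, JM, gstd)` is a split generalized Kähler
structure with torsion 3-form `h`, and `h ≠ 0`. -/
def GKclaim (b : V6 →ₗ[ℝ] V6 →ₗ[ℝ] V6) (h : V6 → V6 → V6 → ℝ) : Prop :=
  IsGenKahler b JP JM gstd ∧ (∀ x, JP (JM x) = JM (JP x)) ∧
    (∀ x y z, dC b JP gstd x y z = h x y z) ∧ (∃ x y z, h x y z ≠ 0)


/-! All seven algebras are almost abelian with `ad_{f₆}` acting by `a` on `f₁` and by
rotation-dilations on the planes `span{f₂,f₃}` (trace `-a`) and `span{f₄,f₅}` (trace `2d`).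
`J₊` and `J₋` send `f₁` to `f₆` and turn each plane by a quarter turn, so they commute with
`ad_{f₆}` on the `J±`-invariant ideal `span{f₂,…,f₅}`: this makes them integrable.
Since `J₋ = -J₊` on the planes, `ω₋` is `ω₊` with its plane part negated, and as `f¹⁶` is closed,
`dᶜ₋ω₋ = -dᶜ₊ω₊ = -(a f¹²³ - 2d f¹⁴⁵)`. Finally `d f¹²³ = 0` because `ad_{f₆}` is traceless on
`span{f₁,f₂,f₃}`, while `d f¹⁴⁵ = (a + 2d) f¹⁴⁵⁶`; so the torsion is closed once `d (a + 2d) = 0`. -/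

open Matrix

def adF6 (a c d e : ℝ) : Matrix (Fin 6) (Fin 6) ℝ :=
  !![a,0,0,0,0,0; 0,-a/2,c,0,0,0; 0,-c,-a/2,0,0,0; 0,0,0,d,e,0; 0,0,0,-e,d,0; 0,0,0,0,0,0]

lemma k1_eq_braa_adF6 (r : ℝ) : k1 (-1/2) r = braa (adF6 1 0 r 0) := by
  unfold k1; congr 1; ext i j; fin_cases i <;> fin_cases j <;> norm_num [adF6]

lemma k8_eq_braa_adF6 (p s : ℝ) : k8 p (-p/2) s = braa (adF6 p 0 s 1) := by
  unfold k8; congr 1; ext i j; fin_cases i <;> fin_cases j <;> norm_num [adF6]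

lemma k11_eq_braa_adF6 (p r s : ℝ) : k11 p (-p/2) r s = braa (adF6 p 1 r s) := rfl

lemma k17_eq_braa_adF6 : k17 (-1/2) = braa (adF6 1 0 0 0) := by
  unfold k17; congr 1; ext i j; fin_cases i <;> fin_cases j <;> norm_num [adF6]

lemma k19_eq_braa_adF6 (p : ℝ) : k19 p (-p/2) = braa (adF6 p 1 0 0) := by
  unfold k19; congr 1; ext i j; fin_cases i <;> fin_cases j <;> norm_num [adF6]

lemma braa_apply (A : Matrix (Fin 6) (Fin 6) ℝ) (x y : V6) :
    braa A x y = x 5 • A *ᵥ y - y 5 • A *ᵥ x := rfl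

lemma adF6_mulVec (a c d e : ℝ) (y : V6) : adF6 a c d e *ᵥ y =
    ![a * y 0, -(a/2) * y 1 + c * y 2, -c * y 1 - a/2 * y 2, d * y 3 + e * y 4,
      -e * y 3 + d * y 4, 0] := by
  ext i; fin_cases i <;>
    simp only [adF6, mulVec, dotProduct, Fin.sum_univ_six, of_apply, cons_val, Fin.reduceFinMk,
      Fin.zero_eta, Fin.mk_one, Fin.isValue] <;> ring

lemma JP_apply (x : V6) : JP x = ![-x 5, -x 2, x 1, -x 4, x 3, x 0] := by
  ext i; fin_cases i <;> simp [JP, endOf, mulVec, dotProduct, Fin.sum_univ_six]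

lemma JM_apply (x : V6) : JM x = ![-x 5, x 2, -x 1, x 4, -x 3, x 0] := by
  ext i; fin_cases i <;> simp [JM, endOf, mulVec, dotProduct, Fin.sum_univ_six]

lemma gstd_apply (x y : V6) : gstd x y = x ⬝ᵥ y := by
  simp [gstd, gOf]

lemma tri_apply (i j k : Fin 6) (x y z : V6) : tri i j k x y z =
    x i * y j * z k - x i * y k * z j - x j * y i * z k + x j * y k * z i
      + x k * y i * z j - x k * y j * z i := by
  rw [tri, det_fin_three]; simp only [of_apply, cons_val]

lemma isHermStr_gstd {br : V6 →ₗ[ℝ] V6 →ₗ[ℝ] V6} {J : V6 →ₗ[ℝ] V6} (hJ : IsCpxStr br J)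
    (hg : ∀ x y, gstd (J x) (J y) = gstd x y) : IsHermStr br J gstd := by
  refine ⟨hJ, fun x y => by simp only [gstd_apply, dotProduct_comm], fun x hx => ?_, hg⟩
  simpa [gstd_apply] using (dotProduct_self_star_pos_iff (v := x)).2 hx

lemma JP_JP (x : V6) : JP (JP x) = -x := by
  ext i; fin_cases i <;> simp [JP_apply]

lemma JM_JM (x : V6) : JM (JM x) = -x := by
  ext i; fin_cases i <;> simp [JM_apply]

lemma JP_JM_comm (x : V6) : JP (JM x) = JM (JP x) := by
  ext i; fin_cases i <;> simp [JP_apply, JM_apply]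

lemma gstd_JP (x y : V6) : gstd (JP x) (JP y) = gstd x y := by
  simp only [gstd_apply, JP_apply, dotProduct, Fin.sum_univ_six, cons_val]; ring

lemma gstd_JM (x y : V6) : gstd (JM x) (JM y) = gstd x y := by
  simp only [gstd_apply, JM_apply, dotProduct, Fin.sum_univ_six, cons_val]; ring

section adF6

variable {a c d e : ℝ}

lemma isCpxStr_JP : IsCpxStr (braa (adF6 a c d e)) JP := by
  refine ⟨JP_JP, fun x y => ?_⟩
  ext i; fin_cases i <;>
    simp only [Nij, braa_apply, adF6_mulVec, JP_apply, Pi.sub_apply, Pi.smul_apply, Pi.zero_apply,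
      smul_eq_mul, Fin.reduceFinMk, Fin.zero_eta, Fin.mk_one, Fin.isValue, cons_val] <;> ring

lemma isCpxStr_JM : IsCpxStr (braa (adF6 a c d e)) JM := by
  refine ⟨JM_JM, fun x y => ?_⟩
  ext i; fin_cases i <;>
    simp only [Nij, braa_apply, adF6_mulVec, JM_apply, Pi.sub_apply, Pi.smul_apply, Pi.zero_apply,
      smul_eq_mul, Fin.reduceFinMk, Fin.zero_eta, Fin.mk_one, Fin.isValue, cons_val] <;> ring

lemma dC_JP (x y z : V6) : dC (braa (adF6 a c d e)) JP gstd x y z =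
    a * tri 0 1 2 x y z - 2 * d * tri 0 3 4 x y z := by
  simp only [dC, d2, fund, braa_apply, adF6_mulVec, JP_apply, gstd_apply, dotProduct,
    Fin.sum_univ_six, tri_apply, Pi.sub_apply, Pi.smul_apply, smul_eq_mul, Fin.isValue, cons_val]
  ring

lemma dC_JM (x y z : V6) : dC (braa (adF6 a c d e)) JM gstd x y z =
    -dC (braa (adF6 a c d e)) JP gstd x y z := by
  rw [dC_JP]
  simp only [dC, d2, fund, braa_apply, adF6_mulVec, JM_apply, gstd_apply, dotProduct,
    Fin.sum_univ_six, tri_apply, Pi.sub_apply, Pi.smul_apply, smul_eq_mul, Fin.isValue, cons_val]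
  ring

lemma d3_dC_JP (hd : d * (a + 2 * d) = 0) (x y z w : V6) :
    d3 (braa (adF6 a c d e)) (dC (braa (adF6 a c d e)) JP gstd) x y z w = 0 := by
  simp only [d3, dC_JP, tri_apply, braa_apply, adF6_mulVec, Pi.sub_apply, Pi.smul_apply,
    smul_eq_mul, Fin.isValue, cons_val]
  rcases mul_eq_zero.1 hd with rfl | had
  · ring
  · obtain rfl : a = -2 * d := by linarith
    ring

theorem gkClaim_braa_adF6 {H : V6 → V6 → V6 → ℝ} (ha : a ≠ 0) (hd : d * (a + 2 * d) = 0)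
    (hH : ∀ x y z, H x y z = a * tri 0 1 2 x y z - 2 * d * tri 0 3 4 x y z) :
    GKclaim (braa (adF6 a c d e)) H := by
  refine ⟨⟨isHermStr_gstd isCpxStr_JP gstd_JP, isHermStr_gstd isCpxStr_JM gstd_JM,
      fun x y z => by rw [dC_JM, add_neg_cancel], d3_dC_JP hd⟩,
    JP_JM_comm, fun x y z => by rw [dC_JP, hH], ![1,0,0,0,0,0], ![0,1,0,0,0,0], ![0,0,1,0,0,0], ?_⟩
  simpa [hH, tri_apply] using ha

end adF6

/-- The explicit split generalized Kähler structures on the seven families of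
Lie algebras, with their torsion 3-forms. -/
theorem stmt_15 :
    GKclaim (k1 (-1/2) (-1/2)) (fun x y z => tri 0 1 2 x y z + tri 0 3 4 x y z) ∧
    (∀ p : ℝ, p ≠ 0 →
      GKclaim (k8 p (-p/2) 0) (fun x y z => p * tri 0 1 2 x y z)) ∧
    (∀ p : ℝ, p ≠ 0 →
      GKclaim (k8 p (-p/2) (-p/2))
        (fun x y z => p * tri 0 1 2 x y z + p * tri 0 3 4 x y z)) ∧
    (∀ p s : ℝ, p ≠ 0 → 1 ≥ |s| → |s| > 0 →
      GKclaim (k11 p (-p/2) 0 s) (fun x y z => p * tri 0 1 2 x y z)) ∧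
    (∀ p s : ℝ, p ≠ 0 → 1 ≥ |s| → |s| > 0 →
      GKclaim (k11 p (-p/2) (-p/2) s)
        (fun x y z => p * tri 0 1 2 x y z + p * tri 0 3 4 x y z)) ∧
    GKclaim (k17 (-1/2)) (fun x y z => tri 0 1 2 x y z) ∧
    (∀ p : ℝ, p ≠ 0 →
      GKclaim (k19 p (-p/2)) (fun x y z => p * tri 0 1 2 x y z)) := by
  refine ⟨?_, fun p hp => ?_, fun p hp => ?_, fun p s hp _ _ => ?_, fun p s hp _ _ => ?_, ?_,
    fun p hp => ?_⟩
  · rw [k1_eq_braa_adF6]; exact gkClaim_braa_adF6 one_ne_zero (by norm_num) fun x y z => by ring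
  · rw [k8_eq_braa_adF6]; exact gkClaim_braa_adF6 hp (zero_mul _) fun x y z => by ring
  · rw [k8_eq_braa_adF6]; exact gkClaim_braa_adF6 hp (by ring) fun x y z => by ring
  · rw [k11_eq_braa_adF6]; exact gkClaim_braa_adF6 hp (zero_mul _) fun x y z => by ring
  · rw [k11_eq_braa_adF6]; exact gkClaim_braa_adF6 hp (by ring) fun x y z => by ring
  · rw [k17_eq_braa_adF6]; exact gkClaim_braa_adF6 one_ne_zero (zero_mul _) fun x y z => by ring
  · rw [k19_eq_braa_adF6]; exact gkClaim_braa_adF6 hp (zero_mul _) fun x y z => by ring
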